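/- arXiv:1310.0950 — 6 statements merged into one kernel-verified Lean document; each statement's English description precedes it below -/
import Mathlib

section
/- Let T be a C_{·0} contraction on a Hilbert space H, i.e., ‖T‖ ≤ 1 and T*^m h → 0 for every h ∈ H. Then the map L_T : H → ℓ²(ℕ, D_{T*}) defined by (L_T h)(m) = D_{T*} T*^m h is a well-defined isometry. -/
/-!
Since `D² = 1 - T T*`, we have `‖D T*^m h‖² = ‖T*^m h‖² - ‖T*^(m+1) h‖²`. The squared norms of
the coordinates of `L_T h` therefore telescope, and their sum is `‖h‖² - lim ‖T*^m h‖² = ‖h‖²`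
because `T*^m h → 0`.
-/

open Filter Topology ContinuousLinearMap

theorem Memℓp.of_summable_sq {ι : Type*} {G : ι → Type*} [∀ i, NormedAddCommGroup (G i)]
    {f : ∀ i, G i} (hf : Summable fun i => ‖f i‖ ^ 2) : Memℓp f 2 :=
  memℓp_gen (by simpa only [ENNReal.toReal_ofNat, Real.rpow_two] using hf)

theorem lp.hasSum_norm_sq {ι : Type*} {G : ι → Type*} [∀ i, NormedAddCommGroup (G i)]
    (f : lp G 2) : HasSum (fun i => ‖f i‖ ^ 2) (‖f‖ ^ 2) := by
  simpa only [ENNReal.toReal_ofNat, Real.rpow_two] using lp.hasSum_norm (by norm_num) f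

section

variable {𝕜 E G ι : Type*} [RCLike 𝕜] [NormedAddCommGroup E] [NormedSpace 𝕜 E]
  [NormedAddCommGroup G] [NormedSpace 𝕜 G]

noncomputable def LinearIsometry.lpTwoOfHasSum (F : ι → E →ₗ[𝕜] G)
    (hF : ∀ x, HasSum (fun i => ‖F i x‖ ^ 2) (‖x‖ ^ 2)) : E →ₗᵢ[𝕜] lp (fun _ : ι => G) 2 where
  toFun x := ⟨fun i => F i x, .of_summable_sq (hF x).summable⟩
  map_add' x y := lp.ext <| funext fun i => map_add (F i) x y
  map_smul' c x := lp.ext <| funext fun i => map_smul (F i) c x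
  norm_map' x := by
    refine (sq_eq_sq₀ (norm_nonneg _) (norm_nonneg _)).mp ?_
    exact (lp.hasSum_norm_sq _).unique (hF x)

end

theorem Antitone.hasSum_sub_succ {a : ℕ → ℝ} (ha : Antitone a)
    (h : Tendsto a atTop (𝓝 0)) : HasSum (fun n => a n - a (n + 1)) (a 0) := by
  rw [hasSum_iff_tendsto_nat_of_nonneg fun n => sub_nonneg.mpr (ha n.le_succ)]
  simp only [Finset.sum_range_sub']
  simpa using (tendsto_const_nhds (x := a 0)).sub h

section

variable {𝕜 E : Type*} [RCLike 𝕜] [NormedAddCommGroup E]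

theorem hasSum_norm_sq_apply_pow [NormedSpace 𝕜 E] {A D : E →L[𝕜] E}
    (hD : ∀ x, ‖D x‖ ^ 2 = ‖x‖ ^ 2 - ‖A x‖ ^ 2)
    (hA : ∀ x, Tendsto (fun m : ℕ => (A ^ m) x) atTop (𝓝 0)) (x : E) :
    HasSum (fun m : ℕ => ‖D ((A ^ m) x)‖ ^ 2) (‖x‖ ^ 2) := by
  set a : ℕ → ℝ := fun m => ‖(A ^ m) x‖ ^ 2
  have hstep : ∀ m, ‖D ((A ^ m) x)‖ ^ 2 = a m - a (m + 1) := fun m => by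
    rw [hD, ← mul_apply_eq_comp, ← pow_succ']
  have ha : Antitone a := antitone_nat_of_succ_le fun m =>
    sub_nonneg.mp (hstep m ▸ sq_nonneg _)
  have hlim : Tendsto a atTop (𝓝 0) := by
    simpa only [norm_zero, zero_pow two_ne_zero] using (hA x).norm.pow 2
  simp only [hstep]
  simpa [a] using ha.hasSum_sub_succ hlim

theorem IsSelfAdjoint.norm_sq_apply_of_sq_eq_one_sub [InnerProductSpace 𝕜 E] [CompleteSpace E]
    {A D : E →L[𝕜] E} (hD : IsSelfAdjoint D) (hsq : D ^ 2 = 1 - star A * A) (x : E) :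
    ‖D x‖ ^ 2 = ‖x‖ ^ 2 - ‖A x‖ ^ 2 := by
  rw [apply_norm_sq_eq_inner_adjoint_left, apply_norm_sq_eq_inner_adjoint_left,
    ← star_eq_adjoint, ← star_eq_adjoint, hD.star_eq, ← mul_def, ← sq, hsq, sub_apply,
    inner_sub_left, map_sub, one_apply_eq_self, mul_apply_eq_comp, @inner_self_eq_norm_sq 𝕜]
  rfl

end

theorem stmt_5_general {H : Type*} [NormedAddCommGroup H] [InnerProductSpace ℂ H] [CompleteSpace H]
    (T D : H →L[ℂ] H)
    (hpure : ∀ h : H, Filter.Tendsto (fun m : ℕ => ((star T) ^ m) h) Filter.atTop (nhds 0))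
    (hDpos : D.IsPositive) (hDsq : D ^ 2 = 1 - T * star T) :
    ∃ L : H →ₗᵢ[ℂ] lp (fun _ : ℕ => H) 2,
      ∀ (h : H) (m : ℕ), (L h) m = D (((star T) ^ m) h) := by
  have hdefect := hDpos.isSelfAdjoint.norm_sq_apply_of_sq_eq_one_sub (A := star T)
    (by rwa [star_star])
  exact ⟨.lpTwoOfHasSum (fun m => (D * star T ^ m : H →L[ℂ] H))
    (hasSum_norm_sq_apply_pow hdefect hpure), fun _ _ => rfl⟩

/-- Let `T` be a `C.₀` contraction on a complex Hilbert space `H` (`T*^m → 0` strongly) and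
`D = D_{T*}` its defect operator.  Then `h ↦ (D T*^m h)ₘ` defines an isometry of `H` into
`ℓ²(ℕ, H)` (with values in the defect space `D_{T*}`). -/
theorem stmt_5 {H : Type*} [NormedAddCommGroup H] [InnerProductSpace ℂ H] [CompleteSpace H]
    (T D : H →L[ℂ] H) (hT : ‖T‖ ≤ 1)
    (hpure : ∀ h : H, Filter.Tendsto (fun m : ℕ => ((star T) ^ m) h) Filter.atTop (nhds 0))
    (hDpos : D.IsPositive) (hDsq : D ^ 2 = 1 - T * star T) :
    ∃ L : H →ₗᵢ[ℂ] lp (fun _ : ℕ => H) 2,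
      ∀ (h : H) (m : ℕ), (L h) m = D (((star T) ^ m) h) :=
  stmt_5_general T D hpure hDpos hDsq
end

section
/- Let T be a contraction on H and λ, w ∈ 𝔻. With θ_T(z) = -T + D_{T*}(I - zT*)^{-1} z D_T (the characteristic function) one has (1 - λ w̄)^{-1} (I - θ_T(λ) θ_T(w)*) = D_{T*} (I - λT*)^{-1} (I - w̄ T)^{-1} D_{T*} as operators on D_{T*}. -/
/-!
The defect operators intertwine `T`: `T D_T = D_{T*} T`. Indeed `T` intertwines their squares
`I - T*T` and `I - TT*`, and a square root of a positive operator is a continuous function of its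
square. Granting this, the identity is algebra: the resolvents `R = (I - λT*)⁻¹` and
`S = (I - w̄T)⁻¹` satisfy `R = I + λRT*` and `S = I + w̄TS`, so
`RS = I + w̄TS + λRT* + λw̄RT*TS`, and expanding `I - θ_T(λ) θ_T(w)*` while moving the defect
operators past `T` and `T*` produces exactly `D_{T*} (RS - λw̄ RS) D_{T*}`.
-/

open ContinuousLinearMap ComplexOrder in
set_option synthInstance.maxHeartbeats 100000 in
theorem ContinuousLinearMap.comp_eq_comp_of_comp_mul_self_eq
    {H K : Type*} [NormedAddCommGroup H] [InnerProductSpace ℂ H] [CompleteSpace H]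
    [NormedAddCommGroup K] [InnerProductSpace ℂ K] [CompleteSpace K]
    {A : H →L[ℂ] H} {B : K →L[ℂ] K} (hA : A.IsPositive) (hB : B.IsPositive) {X : H →L[ℂ] K}
    (h : X ∘L (A * A) = (B * B) ∘L X) : X ∘L A = B ∘L X := by
  -- On `H ⊕ K`, `Y = [[0, 0], [X, 0]]` commutes with `P * P` for `P = diag(A, B)`, hence with
  -- its square root `P`; the lower left entry of `P * Y = Y * P` is the claim.
  let e := WithLp.prodContinuousLinearEquiv 2 ℂ H K
  let P : WithLp 2 (H × K) →L[ℂ] WithLp 2 (H × K) := e.symm ∘L A.prodMap B ∘L e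
  let Y : WithLp 2 (H × K) →L[ℂ] WithLp 2 (H × K) := e.symm ∘L (inr ℂ H K ∘L X ∘L fst ℂ H K) ∘L e
  have hP : 0 ≤ P := by
    refine (nonneg_iff_isPositive P).mpr ((isPositive_iff P).mpr ⟨fun u v => ?_, fun v => ?_⟩)
    · simpa [P, e, WithLp.prod_inner_apply] using
        congr($(hA.isSymmetric u.fst v.fst) + $(hB.isSymmetric u.snd v.snd))
    · simpa [P, e, WithLp.prod_inner_apply] using
        add_nonneg (hA.inner_nonneg_left v.fst) (hB.inner_nonneg_left v.snd)
  have hY : Commute (P * P) Y := by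
    ext v; simpa [P, Y, e] using congr($h v.fst).symm
  have hPY : Commute P Y := by
    simpa [← CFC.sqrt_eq_cfc, CFC.sqrt_mul_self P hP] using hY.cfc_nnreal NNReal.sqrt
  ext x
  simpa [P, Y, e] using congr(($hPY.eq (WithLp.toLp 2 (x, 0))).snd).symm

theorem one_sub_mul_eq_smul_of_defect_relations {𝕜 A : Type*} [CommRing 𝕜] [Ring A]
    [Algebra 𝕜 A] {T T' D D' R S : A} {a b : 𝕜}
    (hD : D * D = 1 - T' * T) (hD' : D' * D' = 1 - T * T')
    (hTD : T * D = D' * T) (hDT' : D * T' = T' * D')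
    (hR : R * (1 - a • T') = 1) (hS : (1 - b • T) * S = 1) :
    1 - (-T + a • (D' * R * D)) * (-T' + b • (D * S * D')) = (1 - a * b) • (D' * R * S * D') := by
  have hR' : R = 1 + a • (R * T') := by
    rwa [mul_sub, mul_one, mul_smul_comm, sub_eq_iff_eq_add] at hR
  have hS' : S = 1 + b • (T * S) := by
    rwa [sub_mul, one_mul, smul_mul_assoc, sub_eq_iff_eq_add] at hS
  have hRS : R * S = 1 + b • (T * S) + a • (R * T') + (a * b) • (R * T' * T * S) := by
    calc R * S = (1 + a • (R * T')) * (1 + b • (T * S)) := by rw [← hR', ← hS']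
      _ = _ := by
        simp only [add_mul, mul_add, one_mul, mul_one, smul_mul_assoc, mul_smul_comm, mul_assoc]
        module
  have hTDx (x : A) : T * (D * x) = D' * (T * x) := by rw [← mul_assoc, hTD, mul_assoc]
  have hDx (x : A) : D * (D * x) = x - T' * (T * x) := by rw [← mul_assoc, hD]; noncomm_ring
  calc 1 - (-T + a • (D' * R * D)) * (-T' + b • (D * S * D'))
      = (1 - T * T') + D' * (b • (T * S) + a • (R * T') + (a * b) • (R * T' * T * S)) * D'
          - (a * b) • (D' * (R * S) * D') := by
        simp only [neg_mul, mul_neg, neg_neg, neg_add, mul_add, add_mul, mul_sub,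
          smul_mul_assoc, mul_smul_comm, mul_assoc, hTDx, hDT', hDx]
        module
    _ = D' * (R * S) * D' - (a * b) • (D' * (R * S) * D') := by
        rw [hRS, ← hD']; noncomm_ring
    _ = (1 - a * b) • (D' * R * S * D') := by
        rw [sub_smul, one_smul]; noncomm_ring

theorem isUnit_one_sub_smul_of_norm_lt_one {𝕜 R : Type*} [NormedField 𝕜] [NormedRing R]
    [NormedAlgebra 𝕜 R] [CompleteSpace R] {z : 𝕜} {x : R} (hz : ‖z‖ < 1) (hx : ‖x‖ ≤ 1) :
    IsUnit (1 - z • x) :=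
  isUnit_one_sub_of_norm_lt_one <| (norm_smul_le z x).trans_lt <|
    (mul_le_of_le_one_right (norm_nonneg z) hx).trans_lt hz

theorem stmt_7_general {H : Type*} [NormedAddCommGroup H] [InnerProductSpace ℂ H] [CompleteSpace H]
    (T D D' : H →L[ℂ] H) (hT : ‖T‖ ≤ 1)
    (hDpos : D.IsPositive) (hDsq : D ^ 2 = 1 - star T * T)
    (hD'pos : D'.IsPositive) (hD'sq : D' ^ 2 = 1 - T * star T)
    (Θ : ℂ → (H →L[ℂ] H))
    (hΘ : ∀ z : ℂ, Θ z = -T + z • (D' * Ring.inverse (1 - z • star T) * D))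
    (lam w : ℂ) (hlam : ‖lam‖ < 1) (hw : ‖w‖ < 1)
    (η : H) :
    (1 - lam * (starRingEnd ℂ) w)⁻¹ • (η - Θ lam (star (Θ w) η)) =
      D' ((Ring.inverse (1 - lam • star T))
        ((Ring.inverse (1 - ((starRingEnd ℂ) w) • T)) (D' η))) := by
  have hDD : D * D = 1 - star T * T := by rw [← sq, hDsq]
  have hD'D' : D' * D' = 1 - T * star T := by rw [← sq, hD'sq]
  have hTD : T * D = D' * T :=
    ContinuousLinearMap.comp_eq_comp_of_comp_mul_self_eq hDpos hD'pos <| by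
      change T * (D * D) = D' * D' * T
      rw [hDD, hD'D']; noncomm_ring
  have hDT : D * star T = star T * D' := by
    simpa [hDpos.isSelfAdjoint.star_eq, hD'pos.isSelfAdjoint.star_eq] using congr(star $hTD)
  have hU : IsUnit (1 - lam • star T) :=
    isUnit_one_sub_smul_of_norm_lt_one hlam (by rwa [norm_star])
  have hV : IsUnit (1 - starRingEnd ℂ w • T) :=
    isUnit_one_sub_smul_of_norm_lt_one (by rwa [RCLike.norm_conj]) hT
  have hΘw : star (Θ w) =
      -star T + starRingEnd ℂ w • (D * Ring.inverse (1 - starRingEnd ℂ w • T) * D') := by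
    rw [hΘ w, star_add, star_neg, star_smul, star_mul, star_mul, hDpos.isSelfAdjoint.star_eq,
      hD'pos.isSelfAdjoint.star_eq, ← Ring.inverse_star, star_sub, star_one, star_smul, star_star,
      mul_assoc, starRingEnd_apply]
  have hc : 1 - lam * starRingEnd ℂ w ≠ 0 := by
    refine sub_ne_zero.mpr fun h => ?_
    have := congrArg norm h
    rw [norm_one, norm_mul, RCLike.norm_conj] at this
    nlinarith [norm_nonneg lam, norm_nonneg w]
  have key := one_sub_mul_eq_smul_of_defect_relations hDD hD'D' hTD hDT
    (Ring.inverse_mul_cancel _ hU) (Ring.mul_inverse_cancel _ hV)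
  rw [← hΘ, ← hΘw] at key
  have := congr($key η)
  simp only [sub_apply, one_apply_eq_self, mul_apply_eq_comp, smul_apply] at this
  rw [this, inv_smul_smul₀ hc]

/-- For a contraction `T` and `λ, w ∈ 𝔻`, with `θ_T(z) = -T + D_{T*}(I - zT*)⁻¹ z D_T` the
characteristic function, one has on the defect space `D_{T*}`:
`(1 - λ w̄)⁻¹ (I - θ_T(λ) θ_T(w)*) = D_{T*} (I - λT*)⁻¹ (I - w̄T)⁻¹ D_{T*}`. -/
theorem stmt_7 {H : Type*} [NormedAddCommGroup H] [InnerProductSpace ℂ H] [CompleteSpace H]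
    (T D D' : H →L[ℂ] H) (hT : ‖T‖ ≤ 1)
    (hDpos : D.IsPositive) (hDsq : D ^ 2 = 1 - star T * T)
    (hD'pos : D'.IsPositive) (hD'sq : D' ^ 2 = 1 - T * star T)
    (Θ : ℂ → (H →L[ℂ] H))
    (hΘ : ∀ z : ℂ, Θ z = -T + z • (D' * Ring.inverse (1 - z • star T) * D))
    (lam w : ℂ) (hlam : ‖lam‖ < 1) (hw : ‖w‖ < 1)
    (η : H) (hη : η ∈ closure (Set.range D')) :
    (1 - lam * (starRingEnd ℂ) w)⁻¹ • (η - Θ lam (star (Θ w) η)) =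
      D' ((Ring.inverse (1 - lam • star T))
        ((Ring.inverse (1 - ((starRingEnd ℂ) w) • T)) (D' η))) :=
  stmt_7_general T D D' hT hDpos hDsq hD'pos hD'sq Θ hΘ lam w hlam hw η
end

section
/- Let T = (T₁, …, Tₙ) be a doubly commuting pure tuple on H, i.e., the Tᵢ are commuting contractions with Tᵢ Tⱼ* = Tⱼ* Tᵢ for i ≠ j and Tᵢ*^m → 0 strongly for each i. Then for every h ∈ H, ‖h‖² = ∑_{k ∈ ℕⁿ} ‖D_{T*} T*^k h‖², where D_{T*} = ∏_{i=1}^n (I - TᵢTᵢ*)^{1/2} and T*^k = T₁*^{k₁} ⋯ Tₙ*^{kₙ}. -/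
/-!
Since `D_{Tᵢ*}² = I - TᵢTᵢ*`, one has `‖D_{Tᵢ*} y‖² = ‖y‖² - ‖Tᵢ* y‖²`, so the one-variable
sum `∑ₖ ‖D_{Tᵢ*} Tᵢ*^k y‖²` telescopes to `‖y‖² - lim ‖Tᵢ*^m y‖² = ‖y‖²` by purity.
For `i ≠ j`, double commutativity makes `Tᵢ*` commute with `D_{Tⱼ*}²`, hence with its positive
square root `D_{Tⱼ*}`. Thus `D_{T*} T*^k h = D_{T₁*} T₁*^{k₁} y` with `y = D' T'^{k'} h` built
from the remaining variables, and the identity follows by summing out one variable at a time.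
-/

open Filter Topology

theorem Commute.of_sq_left_of_nonneg {A : Type*} [CStarAlgebra A] [PartialOrder A]
    [StarOrderedRing A] {d x : A} (hd : 0 ≤ d) (hx : Commute (d ^ 2) x) : Commute d x := by
  simpa only [← CFC.sqrt_eq_cfc, CFC.sqrt_sq d hd] using hx.cfc_nnreal NNReal.sqrt

theorem HasSum.of_fiberwise_of_nonneg {β γ : Type*} {f : β × γ → ℝ} {g : γ → ℝ} {a : ℝ}
    (hf : ∀ p, 0 ≤ f p) (hfib : ∀ c, HasSum (fun b => f (b, c)) (g c)) (hg : HasSum g a) :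
    HasSum f a := by
  rw [← (Equiv.prodComm γ β).hasSum_iff]
  have hsum : Summable (f ∘ Equiv.prodComm γ β) :=
    (summable_prod_of_nonneg (f := f ∘ Equiv.prodComm γ β) fun _ => hf _).2
      ⟨fun c => (hfib c).summable, hg.summable.congr fun c => (hfib c).tsum_eq.symm⟩
  convert hsum.hasSum
  exact hg.unique (hsum.hasSum.prod_fiberwise fun c => hfib c)

theorem hasSum_norm_sq_prod_ofFn {𝕜 E : Type*} [NontriviallyNormedField 𝕜]
    [SeminormedAddCommGroup E] [NormedSpace 𝕜 E] :
    ∀ {n : ℕ} (D S : Fin n → E →L[𝕜] E), (∀ i j, i ≠ j → Commute (D i) (S j)) →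
    (∀ i x, HasSum (fun k : ℕ => ‖D i ((S i ^ k) x)‖ ^ 2) (‖x‖ ^ 2)) →
    ∀ x, HasSum (fun k : Fin n → ℕ =>
      ‖(List.ofFn D).prod ((List.ofFn fun i => S i ^ k i).prod x)‖ ^ 2) (‖x‖ ^ 2)
  | 0, _, _, _, _, x => by simp
  | n + 1, D, S, hDS, hD, x => by
    rw [← (Fin.consEquiv fun _ => ℕ).hasSum_iff]
    refine HasSum.of_fiberwise_of_nonneg (fun _ => sq_nonneg _) (fun k => ?_)
      (hasSum_norm_sq_prod_ofFn (fun i => D i.succ) (fun i => S i.succ)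
        (fun i j hij => hDS _ _ (Fin.succ_injective _ |>.ne hij)) (fun i => hD i.succ) x)
    have hcomm (a : ℕ) (y : E) :
        (List.ofFn fun i => D i.succ).prod ((S 0 ^ a) y)
          = (S 0 ^ a) ((List.ofFn fun i => D i.succ).prod y) := by
      rw [← mul_apply_eq_comp, ← mul_apply_eq_comp]
      refine DFunLike.congr_fun (Commute.list_prod_left _ _ fun d hd => ?_).eq y
      obtain ⟨i, rfl⟩ := List.mem_ofFn.1 hd
      exact (hDS _ _ (Fin.succ_ne_zero i)).pow_right a
    simp only [Function.comp_apply, Fin.consEquiv_apply, List.ofFn_succ, List.prod_cons,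
      mul_apply_eq_comp, Fin.cons_zero, Fin.cons_succ, hcomm]
    exact hD 0 _

section

variable {H : Type*} [NormedAddCommGroup H] [InnerProductSpace ℂ H] [CompleteSpace H]

theorem norm_sq_apply_of_sq_eq_one_sub_mul_star {D T : H →L[ℂ] H} (hD : IsSelfAdjoint D)
    (hDsq : D ^ 2 = 1 - T * star T) (x : H) : ‖D x‖ ^ 2 = ‖x‖ ^ 2 - ‖star T x‖ ^ 2 := by
  rw [ContinuousLinearMap.apply_norm_sq_eq_inner_adjoint_left,
    ContinuousLinearMap.apply_norm_sq_eq_inner_adjoint_left,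
    ← ContinuousLinearMap.star_eq_adjoint, ← ContinuousLinearMap.star_eq_adjoint, star_star,
    hD.star_eq, ← ContinuousLinearMap.mul_def, ← ContinuousLinearMap.mul_def, ← sq, hDsq]
  simp [inner_sub_left]
  norm_cast

theorem hasSum_norm_sq_apply_star_pow {D T : H →L[ℂ] H} (hD : IsSelfAdjoint D)
    (hDsq : D ^ 2 = 1 - T * star T) {x : H}
    (hpure : Tendsto (fun m => (star T ^ m) x) atTop (𝓝 0)) :
    HasSum (fun k : ℕ => ‖D ((star T ^ k) x)‖ ^ 2) (‖x‖ ^ 2) := by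
  have hterm (k : ℕ) :
      ‖D ((star T ^ k) x)‖ ^ 2 = ‖(star T ^ k) x‖ ^ 2 - ‖(star T ^ (k + 1)) x‖ ^ 2 := by
    rw [norm_sq_apply_of_sq_eq_one_sub_mul_star hD hDsq, pow_succ' (star T), mul_apply_eq_comp]
  rw [hasSum_iff_tendsto_nat_of_nonneg fun k => sq_nonneg _]
  simp only [hterm, Finset.sum_range_sub', pow_zero, one_apply_eq_self]
  simpa using tendsto_const_nhds.sub (hpure.norm.pow 2)

end

theorem stmt_9_general {H : Type*} [NormedAddCommGroup H] [InnerProductSpace ℂ H] [CompleteSpace H]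
    (n : ℕ) (T : Fin n → (H →L[ℂ] H))
    (hcomm : ∀ i j, T i * T j = T j * T i)
    (hdc : ∀ i j, i ≠ j → T i * star (T j) = star (T j) * T i)
    (hpure : ∀ i (h : H),
      Filter.Tendsto (fun m : ℕ => ((star (T i)) ^ m) h) Filter.atTop (nhds 0))
    (D : Fin n → (H →L[ℂ] H))
    (hDpos : ∀ i, (D i).IsPositive) (hDsq : ∀ i, (D i) ^ 2 = 1 - T i * star (T i)) :
    ∀ h : H,
      ∑' k : Fin n → ℕ,
        ‖(List.ofFn fun i => D i).prod
          (((List.ofFn fun i => (star (T i)) ^ (k i)).prod) h)‖ ^ 2 = ‖h‖ ^ 2 := by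
  have hDS (i j : Fin n) (hij : i ≠ j) : Commute (D i) (star (T j)) :=
    Commute.of_sq_left_of_nonneg ((ContinuousLinearMap.nonneg_iff_isPositive _).2 (hDpos i)) <| by
      rw [hDsq i]
      exact (Commute.one_left _).sub_left
        (Commute.mul_left (hdc i j hij) (Commute.star_star (hcomm i j)))
  have hone (i : Fin n) (x : H) :
      HasSum (fun k : ℕ => ‖D i ((star (T i) ^ k) x)‖ ^ 2) (‖x‖ ^ 2) :=
    hasSum_norm_sq_apply_star_pow (hDpos i).isSelfAdjoint (hDsq i) (hpure i x)
  exact fun h => (hasSum_norm_sq_prod_ofFn D (fun i => star (T i)) hDS hone h).tsum_eq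

/-- For a doubly commuting pure tuple `T = (T 1, …, T n)` on a complex Hilbert space `H`,
with defect operator `D_{T*} = ∏ᵢ (I - TᵢTᵢ*)^{1/2}`, one has
`‖h‖² = ∑_{k ∈ ℕⁿ} ‖D_{T*} T*^k h‖²` for every `h ∈ H`. -/
theorem stmt_9 {H : Type*} [NormedAddCommGroup H] [InnerProductSpace ℂ H] [CompleteSpace H]
    (n : ℕ) (T : Fin n → (H →L[ℂ] H))
    (hcontr : ∀ i, ‖T i‖ ≤ 1)
    (hcomm : ∀ i j, T i * T j = T j * T i)
    (hdc : ∀ i j, i ≠ j → T i * star (T j) = star (T j) * T i)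
    (hpure : ∀ i (h : H),
      Filter.Tendsto (fun m : ℕ => ((star (T i)) ^ m) h) Filter.atTop (nhds 0))
    (D : Fin n → (H →L[ℂ] H))
    (hDpos : ∀ i, (D i).IsPositive) (hDsq : ∀ i, (D i) ^ 2 = 1 - T i * star (T i)) :
    ∀ h : H,
      ∑' k : Fin n → ℕ,
        ‖(List.ofFn fun i => D i).prod
          (((List.ofFn fun i => (star (T i)) ^ (k i)).prod) h)‖ ^ 2 = ‖h‖ ^ 2 :=
  stmt_9_general n T hcomm hdc hpure D hDpos hDsq
end

section
/- Let T = (T₁, …, Tₙ) be a doubly commuting pure tuple on H. Then ran L_T is a jointly (S₁*, …, Sₙ*)-invariant closed subspace Q of ℓ²(ℕⁿ, D_{T*}), and for each i, Tᵢ is unitarily equivalent (via L_T) to P_Q Sᵢ|_Q, where Sᵢ are the coordinate shifts. Thus (S₁, …, Sₙ) on ℓ²(ℕⁿ, D_{T*}) is an isometric dilation of T. -/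
open scoped InnerProductSpace

/-! Because the `Tᵢ*` commute, the coordinate of `L h` at `k + eᵢ` is the coordinate of
`L (Tᵢ* h)` at `k`, i.e. `L Tᵢ* = Sᵢ* L`; in particular `ran L` is `Sᵢ*`-invariant, and it is
closed since `L` is an isometry. Taking adjoints against vectors `L y = P w` of the range gives
`⟪P Sᵢ L h, w⟫ = ⟪L h, L Tᵢ* y⟫ = ⟪Tᵢ h, y⟫ = ⟪L Tᵢ h, w⟫`, so `L Tᵢ = P Sᵢ L`. -/

namespace List

theorem prod_ofFn_update_mul {M : Type*} [Monoid M] {n : ℕ} (f : Fin n → M) (i : Fin n) {c : M}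
    (hc : ∀ j, Commute c (f j)) :
    (ofFn (Function.update f i (f i * c))).prod = (ofFn f).prod * c := by
  induction n with
  | zero => exact i.elim0
  | succ m ih =>
    rw [ofFn_succ, ofFn_succ, prod_cons, prod_cons, mul_assoc]
    cases i using Fin.cases with
    | zero =>
      have htail : Commute c (ofFn fun j : Fin m => f j.succ).prod :=
        Commute.list_prod_right _ _ fun _ hx => by
          obtain ⟨j, rfl⟩ := mem_ofFn.mp hx
          exact hc _
      simp only [Function.update_self, Function.update_of_ne (Fin.succ_ne_zero _), mul_assoc,
        htail.eq]
    | succ j =>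
      have hcomp := Function.update_comp_eq_of_injective f (Fin.succ_injective m) j (f j.succ * c)
      rw [Function.update_of_ne (Fin.succ_ne_zero j).symm,
        show (fun x : Fin m => Function.update f j.succ (f j.succ * c) x.succ) = _ from hcomp]
      exact congrArg (f 0 * ·) (ih (f ∘ Fin.succ) j fun x => hc x.succ)

theorem prod_ofFn_pow_add_single {M : Type*} [Monoid M] {n : ℕ} {a : Fin n → M}
    (ha : ∀ i j, Commute (a i) (a j)) (k : Fin n → ℕ) (i : Fin n) :
    (ofFn fun j => a j ^ (k + Pi.single i 1 : Fin n → ℕ) j).prod =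
      (ofFn fun j => a j ^ k j).prod * a i := by
  rw [← prod_ofFn_update_mul _ i fun j => (ha i j).pow_right _]
  congr 2
  funext j
  rcases eq_or_ne j i with rfl | hj
  · simp [pow_succ]
  · simp [Function.update_of_ne hj, Pi.single_eq_of_ne hj]

end List

theorem tsum_add_single_eq {ι α : Type*} [DecidableEq ι] [AddCommMonoid α] [TopologicalSpace α]
    (i : ι) {f : (ι → ℕ) → α} (hf : ∀ k, k i = 0 → f k = 0) :
    ∑' k, f (k + (Pi.single i 1 : ι → ℕ)) = ∑' k, f k := by
  refine (add_left_injective _).tsum_eq fun k hk => ⟨k - Pi.single i (1 : ℕ), ?_⟩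
  have hki : 1 ≤ k i := Nat.one_le_iff_ne_zero.mpr fun h => hk (hf k h)
  ext j
  rcases eq_or_ne j i with rfl | hj
  · simp [Nat.sub_add_cancel hki]
  · simp [Pi.single_eq_of_ne hj]

section CoordinateShift

variable {𝕜 ι E : Type*} [RCLike 𝕜] [DecidableEq ι] [NormedAddCommGroup E]
  [InnerProductSpace 𝕜 E]

def IsCoordShift (i : ι) (S : lp (fun _ : ι → ℕ => E) 2 →L[𝕜] lp (fun _ : ι → ℕ => E) 2) :
    Prop :=
  ∀ a k, S a k = if k i = 0 then 0 else a (k - Pi.single i 1)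

namespace IsCoordShift

variable {i : ι} {S : lp (fun _ : ι → ℕ => E) 2 →L[𝕜] lp (fun _ : ι → ℕ => E) 2}

theorem apply_of_eq_zero (hS : IsCoordShift i S) (a : lp (fun _ : ι → ℕ => E) 2) {k : ι → ℕ}
    (hk : k i = 0) : S a k = 0 := by
  rw [hS, if_pos hk]

theorem apply_add_single (hS : IsCoordShift i S) (a : lp (fun _ : ι → ℕ => E) 2) (k : ι → ℕ) :
    S a (k + Pi.single i 1) = a k := by
  rw [hS, if_neg (by simp), add_tsub_cancel_right]

theorem inner_map_left (hS : IsCoordShift i S) (a b : lp (fun _ : ι → ℕ => E) 2) :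
    ⟪S a, b⟫_𝕜 = ∑' k, ⟪a k, b (k + Pi.single i 1)⟫_𝕜 := by
  rw [lp.inner_eq_tsum, ← tsum_add_single_eq i fun k hk => by
    rw [hS.apply_of_eq_zero a hk, inner_zero_left]]
  simp only [hS.apply_add_single]

theorem inner_map_map (hS : IsCoordShift i S) (a b : lp (fun _ : ι → ℕ => E) 2) :
    ⟪S a, S b⟫_𝕜 = ⟪a, b⟫_𝕜 := by
  simp only [hS.inner_map_left, hS.apply_add_single, lp.inner_eq_tsum]

theorem isometry (hS : IsCoordShift i S) : Isometry S :=
  (S.toLinearMap.isometryOfInner hS.inner_map_map).isometry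

theorem adjoint_apply_eq [CompleteSpace E] (hS : IsCoordShift i S)
    {x y : lp (fun _ : ι → ℕ => E) 2} (hxy : ∀ k, x k = y (k + Pi.single i 1)) :
    ContinuousLinearMap.adjoint S y = x := by
  refine ext_inner_left 𝕜 fun a => ?_
  rw [ContinuousLinearMap.adjoint_inner_right, hS.inner_map_left, lp.inner_eq_tsum]
  simp only [hxy]

end IsCoordShift

end CoordinateShift

theorem LinearIsometry.map_apply_eq_compression_apply {𝕜 E F : Type*} [RCLike 𝕜]
    [NormedAddCommGroup E] [InnerProductSpace 𝕜 E] [CompleteSpace E]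
    [NormedAddCommGroup F] [InnerProductSpace 𝕜 F] [CompleteSpace F]
    (L : E →ₗᵢ[𝕜] F) {A : E →L[𝕜] E} {B : F →L[𝕜] F}
    (hAB : ∀ x, L (ContinuousLinearMap.adjoint A x) = ContinuousLinearMap.adjoint B (L x))
    {P : F →L[𝕜] F} (hPidem : IsIdempotentElem P) (hPsa : IsSelfAdjoint P)
    (hPran : Set.range P = Set.range L) (x : E) :
    L (A x) = P (B (L x)) := by
  have hfix : ∀ y, P (L y) = L y := fun y => by
    obtain ⟨z, hz⟩ : L y ∈ Set.range P := hPran ▸ Set.mem_range_self y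
    rw [← hz]
    exact DFunLike.congr_fun hPidem z
  have hPsym : ∀ u v, ⟪P u, v⟫_𝕜 = ⟪u, P v⟫_𝕜 := hPsa.isSymmetric
  refine ext_inner_right 𝕜 fun w => ?_
  obtain ⟨y, hy⟩ : P w ∈ Set.range L := hPran ▸ Set.mem_range_self w
  calc ⟪L (A x), w⟫_𝕜
      = ⟪L (A x), L y⟫_𝕜 := by rw [hy, ← hPsym, hfix]
    _ = ⟪L x, ContinuousLinearMap.adjoint B (L y)⟫_𝕜 := by
        rw [← hAB, L.inner_map_map, L.inner_map_map, ContinuousLinearMap.adjoint_inner_right]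
    _ = ⟪P (B (L x)), w⟫_𝕜 := by
        rw [ContinuousLinearMap.adjoint_inner_right, hPsym, hy]

theorem stmt_13_general {H : Type*} [NormedAddCommGroup H] [InnerProductSpace ℂ H] [CompleteSpace H]
    (n : ℕ) (T : Fin n → (H →L[ℂ] H))
    (hcomm : ∀ i j, T i * T j = T j * T i)
    (D : Fin n → (H →L[ℂ] H))
    (L : H →ₗᵢ[ℂ] lp (fun _ : Fin n → ℕ => H) 2)
    (hL : ∀ (h : H) (k : Fin n → ℕ),
      (L h) k = (List.ofFn fun i => D i).prod
        (((List.ofFn fun i => (star (T i)) ^ (k i)).prod) h))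
    (S : Fin n → (lp (fun _ : Fin n → ℕ => H) 2 →L[ℂ] lp (fun _ : Fin n → ℕ => H) 2))
    (hS : ∀ i (a : lp (fun _ : Fin n → ℕ => H) 2) (k : Fin n → ℕ),
      (S i a) k = if k i = 0 then 0 else a (k - Pi.single i 1))
    (P : lp (fun _ : Fin n → ℕ => H) 2 →L[ℂ] lp (fun _ : Fin n → ℕ => H) 2)
    (hPidem : IsIdempotentElem P) (hPsa : IsSelfAdjoint P)
    (hPran : Set.range ⇑P = Set.range ⇑L) :
    IsClosed (Set.range ⇑L) ∧
    (∀ i, Isometry (S i)) ∧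
    (∀ i x, x ∈ Set.range ⇑L → ContinuousLinearMap.adjoint (S i) x ∈ Set.range ⇑L) ∧
    (∀ i (h : H), L (star (T i) h) = ContinuousLinearMap.adjoint (S i) (L h)) ∧
    (∀ i (h : H), L (T i h) = P (S i (L h))) := by
  have hshift : ∀ i, IsCoordShift i (S i) := hS
  have hstar_comm : ∀ i j, Commute (star (T i)) (star (T j)) := fun i j =>
    Commute.star_star (hcomm i j)
  have hL_shift : ∀ i h k, L (star (T i) h) k = L h (k + Pi.single i 1) := fun i h k => by
    rw [hL, hL, List.prod_ofFn_pow_add_single hstar_comm]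
    rfl
  have hintertwine : ∀ i h, L (star (T i) h) = ContinuousLinearMap.adjoint (S i) (L h) :=
    fun i h => ((hshift i).adjoint_apply_eq (hL_shift i h)).symm
  refine ⟨L.isometry.isClosedEmbedding.isClosed_range, fun i => (hshift i).isometry, ?_,
    hintertwine, fun i => L.map_apply_eq_compression_apply (hintertwine i) hPidem hPsa hPran⟩
  rintro i _ ⟨h, rfl⟩
  exact ⟨star (T i) h, hintertwine i h⟩

/-- For a doubly commuting pure tuple `T` on `H`, the range `Q` of the dilation isometry
`L_T : H → ℓ²(ℕⁿ, D_{T*})` is a closed, jointly `(S₁*, …, Sₙ*)`-invariant subspace, and via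
`L_T` each `Tᵢ` is unitarily equivalent to `P_Q Sᵢ|_Q`; the coordinate shifts `Sᵢ` are
isometries, so `(S₁, …, Sₙ)` is an isometric dilation of `T`. -/
theorem stmt_13 {H : Type*} [NormedAddCommGroup H] [InnerProductSpace ℂ H] [CompleteSpace H]
    (n : ℕ) (T : Fin n → (H →L[ℂ] H))
    (hcontr : ∀ i, ‖T i‖ ≤ 1)
    (hcomm : ∀ i j, T i * T j = T j * T i)
    (hdc : ∀ i j, i ≠ j → T i * star (T j) = star (T j) * T i)
    (hpure : ∀ i (h : H),
      Filter.Tendsto (fun m : ℕ => ((star (T i)) ^ m) h) Filter.atTop (nhds 0))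
    (D : Fin n → (H →L[ℂ] H))
    (hDpos : ∀ i, (D i).IsPositive) (hDsq : ∀ i, (D i) ^ 2 = 1 - T i * star (T i))
    (L : H →ₗᵢ[ℂ] lp (fun _ : Fin n → ℕ => H) 2)
    (hL : ∀ (h : H) (k : Fin n → ℕ),
      (L h) k = (List.ofFn fun i => D i).prod
        (((List.ofFn fun i => (star (T i)) ^ (k i)).prod) h))
    (S : Fin n → (lp (fun _ : Fin n → ℕ => H) 2 →L[ℂ] lp (fun _ : Fin n → ℕ => H) 2))
    (hS : ∀ i (a : lp (fun _ : Fin n → ℕ => H) 2) (k : Fin n → ℕ),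
      (S i a) k = if k i = 0 then 0 else a (k - Pi.single i 1))
    (P : lp (fun _ : Fin n → ℕ => H) 2 →L[ℂ] lp (fun _ : Fin n → ℕ => H) 2)
    (hPidem : IsIdempotentElem P) (hPsa : IsSelfAdjoint P)
    (hPran : Set.range ⇑P = Set.range ⇑L) :
    IsClosed (Set.range ⇑L) ∧
    (∀ i, Isometry (S i)) ∧
    (∀ i x, x ∈ Set.range ⇑L → ContinuousLinearMap.adjoint (S i) x ∈ Set.range ⇑L) ∧
    (∀ i (h : H), L (star (T i) h) = ContinuousLinearMap.adjoint (S i) (L h)) ∧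
    (∀ i (h : H), L (T i h) = P (S i (L h))) :=
  stmt_13_general n T hcomm D L hL S hS P hPidem hPsa hPran
end

section
/- Let T = (T₁, …, Tₙ) be a doubly commuting pure tuple on H and L_T the dilation isometry. Then the minimality condition holds: the closed span of { S^k (L_T h) : k ∈ ℕⁿ, h ∈ H } equals all of ℓ²(ℕⁿ, D_{T*}). -/
/-!
Write `1_s` for the indicator vector of `s ⊆ {1, …, n}` and `T*^k`, `S^k` for multi-powers. The
`(k + 1_s)`-shift of `L_T (T*^{1_s} h)` has `m`-th coordinate `D_{T*} T*^{m-k} h` when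
`k + 1_s ≤ m` and `0` otherwise, so by inclusion–exclusion
`∑_s (-1)^|s| S^{k + 1_s} L_T (T*^{1_s} h)` is the sequence with the single entry `D_{T*} h` at
`k`. As the range of `D_{T*}` is dense in the closure of this range, the closed span contains every
`lp.single k v`, and these span `ℓ²`.
-/

open Finset

section MultiPow

variable {M : Type*} [Monoid M] {n : ℕ}

def multiPow (A : Fin n → M) (k : Fin n → ℕ) : M :=
  (List.ofFn fun i => A i ^ k i).prod

@[simp]
lemma multiPow_zero (A : Fin n → M) : multiPow A 0 = 1 := by
  simp [multiPow]

lemma multiPow_add {A : Fin n → M} (hA : ∀ i j, Commute (A i) (A j)) (k l : Fin n → ℕ) :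
    multiPow A (k + l) = multiPow A k * multiPow A l := by
  induction n with
  | zero => simp [multiPow]
  | succ n ih =>
    have hcomm : Commute (A 0 ^ l 0) (multiPow (fun i : Fin n => A i.succ) fun i => k i.succ) :=
      Commute.list_prod_right _ _ fun x hx => by
        obtain ⟨i, rfl⟩ := List.mem_ofFn.mp hx
        exact (hA 0 i.succ).pow_pow _ _
    have ih' := ih (fun i j => hA i.succ j.succ) (fun i => k i.succ) fun i => l i.succ
    simp only [multiPow, List.ofFn_succ, List.prod_cons, Pi.add_apply, pow_add] at ih' hcomm ⊢
    rw [ih', mul_assoc, ← mul_assoc (A 0 ^ l 0), hcomm.eq]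
    simp only [mul_assoc]

end MultiPow

section Shift

variable {ι 𝕜 E : Type*} [NormedField 𝕜] [NormedAddCommGroup E] [NormedSpace 𝕜 E]
  {p : ENNReal} [Fact (1 ≤ p)]

open Classical in
def IsShiftBy (A : lp (fun _ : ι → ℕ => E) p →L[𝕜] lp (fun _ : ι → ℕ => E) p) (c : ι → ℕ) :
    Prop :=
  ∀ a m, A a m = if c ≤ m then a (m - c) else 0

namespace IsShiftBy

variable {A B : lp (fun _ : ι → ℕ => E) p →L[𝕜] lp (fun _ : ι → ℕ => E) p} {c d : ι → ℕ}

lemma one : IsShiftBy (1 : lp (fun _ : ι → ℕ => E) p →L[𝕜] _) 0 := by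
  intro a m
  simp

lemma mul (hA : IsShiftBy A c) (hB : IsShiftBy B d) : IsShiftBy (A * B) (c + d) := by
  intro a m
  rw [mul_apply_eq_comp, hA, hB]
  by_cases hc : c ≤ m
  · rw [if_pos hc, tsub_tsub]
    classical exact if_congr (le_tsub_iff_left hc) rfl rfl
  · rw [if_neg hc, if_neg fun h => hc (le_self_add.trans h)]

lemma pow (hA : IsShiftBy A c) (q : ℕ) : IsShiftBy (A ^ q) (q • c) := by
  induction q with
  | zero => simpa using one
  | succ q ih =>
    rw [pow_succ, succ_nsmul]
    exact ih.mul hA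

lemma list_prod {κ : Type*} {F : κ → lp (fun _ : ι → ℕ => E) p →L[𝕜] lp (fun _ : ι → ℕ => E) p}
    {f : κ → ι → ℕ} (l : List κ) (h : ∀ j ∈ l, IsShiftBy (F j) (f j)) :
    IsShiftBy (l.map F).prod (l.map f).sum := by
  induction l with
  | nil => simpa using one
  | cons j l ih =>
    simpa using (h j (by simp)).mul (ih fun j' hj' => h j' (by simp [hj']))

lemma of_single_one [DecidableEq ι] {i : ι}
    (h : ∀ a m, A a m = if m i = 0 then 0 else a (m - Pi.single i 1)) :
    IsShiftBy A (Pi.single i 1) := by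
  intro a m
  have hle : Pi.single i 1 ≤ m ↔ m i ≠ 0 := by
    refine ⟨fun hm => Nat.one_le_iff_ne_zero.mp (by simpa using hm i), fun hm j => ?_⟩
    rcases eq_or_ne j i with rfl | hj
    · simpa [Nat.one_le_iff_ne_zero] using hm
    · simp [hj]
  rw [h]
  by_cases hm : m i = 0
  · rw [if_pos hm, if_neg (hle.not.mpr (not_not.mpr hm))]
  · rw [if_neg hm, if_pos (hle.mpr hm)]

end IsShiftBy

lemma isShiftBy_multiPow {n : ℕ}
    {S : Fin n → lp (fun _ : (Fin n → ℕ) => E) p →L[𝕜] lp (fun _ : (Fin n → ℕ) => E) p}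
    (hS : ∀ i, IsShiftBy (S i) (Pi.single i 1)) (k : Fin n → ℕ) :
    IsShiftBy (multiPow S k) k := by
  have h := IsShiftBy.list_prod (F := fun i => S i ^ k i) (f := fun i => k i • Pi.single i 1)
    (List.finRange n) fun i _ => (hS i).pow (k i)
  rw [← List.ofFn_eq_map, ← List.ofFn_eq_map, List.sum_ofFn] at h
  simpa [multiPow, ← Pi.single_smul, Finset.univ_sum_single] using h

end Shift

open Classical in
lemma add_indicator_le_iff {ι : Type*} [Fintype ι] {k m : ι → ℕ} (hkm : k ≤ m) (s : Finset ι) :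
    k + (s : Set ι).indicator 1 ≤ m ↔ s ⊆ univ.filter fun i => k i < m i := by
  simp only [Pi.le_def, Pi.add_apply, Set.indicator_apply, Finset.mem_coe, Pi.one_apply,
    subset_iff, mem_filter, mem_univ, true_and]
  refine ⟨fun h i hi => by simpa [hi] using h i, fun h i => ?_⟩
  by_cases hi : i ∈ s
  · simpa [hi] using h hi
  · simpa [hi] using hkm i

open Classical in
lemma sum_neg_one_pow_card_of_add_indicator_le {ι R : Type*} [Fintype ι] [Ring R] (k m : ι → ℕ) :
    (∑ s : Finset ι, if k + (s : Set ι).indicator 1 ≤ m then (-1 : R) ^ #s else 0) =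
      if m = k then 1 else 0 := by
  by_cases hkm : k ≤ m
  · set t := univ.filter fun i => k i < m i
    have ht : t = ∅ ↔ m = k := by
      simp only [t, filter_eq_empty_iff, mem_univ, true_implies, not_lt, funext_iff]
      exact ⟨fun h i => le_antisymm (h (x := i)) (hkm i), fun h i => (h i).le⟩
    rw [← sum_filter, filter_congr fun s _ => add_indicator_le_iff hkm s, filter_subset_univ]
    have := congrArg (Int.cast : ℤ → R) (sum_powerset_neg_one_pow_card (x := t))
    push_cast at this
    rw [this]
    exact if_congr ht rfl rfl
  · rw [if_neg fun h => hkm h.ge]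
    exact sum_eq_zero fun s _ => if_neg fun h => hkm (le_self_add.trans h)

section Orbit

variable {𝕜 E M X : Type*} [NormedField 𝕜] [NormedAddCommGroup E] [NormedSpace 𝕜 E]
  {p : ENNReal} [Fact (1 ≤ p)] [Monoid M] [MulAction M X] {n : ℕ}

theorem single_mem_span_multiPow_shift
    {S : Fin n → lp (fun _ : Fin n → ℕ => E) p →L[𝕜] lp (fun _ : Fin n → ℕ => E) p}
    (hS : ∀ i, IsShiftBy (S i) (Pi.single i 1)) {B : Fin n → M} (hB : ∀ i j, Commute (B i) (B j))
    {L : X → lp (fun _ : Fin n → ℕ => E) p} {P : X → E} (hL : ∀ x m, L x m = P (multiPow B m • x))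
    (k : Fin n → ℕ) (x : X) :
    lp.single p k (P x) ∈
      Submodule.span 𝕜 {v | ∃ (k : Fin n → ℕ) (x : X), v = multiPow S k (L x)} := by
  classical
  set u : Finset (Fin n) → Fin n → ℕ := fun s => (s : Set (Fin n)).indicator 1
  have hcoord : ∀ s m, multiPow S (k + u s) (L (multiPow B (u s) • x)) m =
      if k + u s ≤ m then P (multiPow B (m - k) • x) else 0 := by
    intro s m
    rw [isShiftBy_multiPow hS]
    split_ifs with h
    · rw [hL, ← mul_smul, ← multiPow_add hB, tsub_add_eq_tsub_tsub,
        tsub_add_cancel_of_le (le_tsub_of_add_le_left h)]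
    · rfl
  have hcomb : ∑ s, ((-1 : 𝕜) ^ #s) • multiPow S (k + u s) (L (multiPow B (u s) • x)) =
      lp.single p k (P x) := by
    ext m
    have hterm : ∀ s, ((-1 : 𝕜) ^ #s) • (if k + u s ≤ m then P (multiPow B (m - k) • x) else 0) =
        (if k + u s ≤ m then (-1 : 𝕜) ^ #s else 0) • P (multiPow B (m - k) • x) := by
      intro s
      split_ifs <;> simp
    simp only [lp.coeFn_sum, Finset.sum_apply, lp.coeFn_smul, Pi.smul_apply, hcoord, hterm,
      ← Finset.sum_smul, lp.single_apply, Pi.single_apply]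
    rw [sum_neg_one_pow_card_of_add_indicator_le]
    split_ifs with h
    · simp [h]
    · simp
  rw [← hcomb]
  exact Submodule.sum_mem _ fun s _ => Submodule.smul_mem _ _ (Submodule.subset_span ⟨_, _, rfl⟩)

end Orbit

theorem Submodule.dense_setOf_mem_topologicalClosure {R M : Type*} [Semiring R]
    [TopologicalSpace M] [AddCommMonoid M] [Module R M] [ContinuousConstSMul R M] [ContinuousAdd M]
    (N : Submodule R M) : Dense {x : N.topologicalClosure | (x : M) ∈ N} := by
  refine Subtype.dense_iff.mpr fun x hx => ?_
  rw [N.topologicalClosure_coe] at hx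
  refine closure_mono (fun y hy => ?_) hx
  exact ⟨⟨y, N.le_topologicalClosure hy⟩, hy, rfl⟩

theorem lp.topologicalClosure_eq_top_of_single_mem {α 𝕜 : Type*} {E : α → Type*} [DecidableEq α]
    [NormedField 𝕜] [∀ i, NormedAddCommGroup (E i)] [∀ i, NormedSpace 𝕜 (E i)] {p : ENNReal}
    [Fact (1 ≤ p)]
    (hp : p ≠ ⊤) {K : Submodule 𝕜 (lp E p)} {s : ∀ i, Set (E i)} (hs : ∀ i, Dense (s i))
    (hK : ∀ i, ∀ x ∈ s i, lp.single p i x ∈ K) : K.topologicalClosure = ⊤ := by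
  have hsingle : ∀ i x, lp.single p i x ∈ K.topologicalClosure := fun i =>
    (hs i).induction (fun x hx => K.le_topologicalClosure (hK i x hx))
      (K.isClosed_topologicalClosure.preimage (lp.isometry_single i).continuous)
  refine Submodule.eq_top_iff'.mpr fun f => K.isClosed_topologicalClosure.mem_of_tendsto
    (lp.hasSum_single hp f) (Filter.Eventually.of_forall fun t => ?_)
  exact Submodule.sum_mem _ fun i _ => hsingle i (f i)

theorem stmt_14_general {H : Type*} [NormedAddCommGroup H] [InnerProductSpace ℂ H] [CompleteSpace H]
    (n : ℕ) (T : Fin n → (H →L[ℂ] H))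
    (hcomm : ∀ i j, T i * T j = T j * T i)
    (D : Fin n → (H →L[ℂ] H))
    (E : Submodule ℂ H) (hE : E = ((LinearMap.range (((List.ofFn fun i => D i).prod :
      H →L[ℂ] H) : H →ₗ[ℂ] H)).topologicalClosure))
    (L : H →ₗᵢ[ℂ] lp (fun _ : Fin n → ℕ => E) 2)
    (hL : ∀ (h : H) (k : Fin n → ℕ),
      ((L h) k : H) = (List.ofFn fun i => D i).prod
        (((List.ofFn fun i => (star (T i)) ^ (k i)).prod) h))
    (S : Fin n → (lp (fun _ : Fin n → ℕ => E) 2 →L[ℂ] lp (fun _ : Fin n → ℕ => E) 2))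
    (hS : ∀ i (a : lp (fun _ : Fin n → ℕ => E) 2) (k : Fin n → ℕ),
      (S i a) k = if k i = 0 then 0 else a (k - Pi.single i 1)) :
    (Submodule.span ℂ {x : lp (fun _ : Fin n → ℕ => E) 2 |
      ∃ (k : Fin n → ℕ) (h : H),
        x = ((List.ofFn fun i => (S i) ^ (k i)).prod) (L h)}).topologicalClosure = ⊤ := by
  subst hE
  let Dp : H →L[ℂ] H := (List.ofFn fun i => D i).prod
  let P : H → (LinearMap.range (Dp : H →ₗ[ℂ] H)).topologicalClosure := fun x =>
    ⟨Dp x, Submodule.le_topologicalClosure _ (LinearMap.mem_range_self _ x)⟩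
  have hLP : ∀ x m, L x m = P (multiPow (fun i => star (T i)) m • x) := fun x m =>
    Subtype.ext (hL x m)
  have hstar : ∀ i j, Commute (star (T i)) (star (T j)) := fun i j =>
    commute_star_star.mpr (hcomm i j)
  have hshift : ∀ i, IsShiftBy (S i) (Pi.single i 1) := fun i => IsShiftBy.of_single_one (hS i)
  refine lp.topologicalClosure_eq_top_of_single_mem ENNReal.ofNat_ne_top
    (fun _ => Submodule.dense_setOf_mem_topologicalClosure _) ?_
  rintro k v ⟨x, hx⟩
  obtain rfl : v = P x := Subtype.ext hx.symm
  exact single_mem_span_multiPow_shift hshift hstar hLP k x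

/-- Minimality of the dilation of a doubly commuting pure tuple: the closed linear span of
`{ S^k (L_T h) : k ∈ ℕⁿ, h ∈ H }` is all of `ℓ²(ℕⁿ, D_{T*})` (i.e. of the codomain Hardy
space carrying the values of `L_T`). -/
theorem stmt_14 {H : Type*} [NormedAddCommGroup H] [InnerProductSpace ℂ H] [CompleteSpace H]
    (n : ℕ) (T : Fin n → (H →L[ℂ] H))
    (hcontr : ∀ i, ‖T i‖ ≤ 1)
    (hcomm : ∀ i j, T i * T j = T j * T i)
    (hdc : ∀ i j, i ≠ j → T i * star (T j) = star (T j) * T i)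
    (hpure : ∀ i (h : H),
      Filter.Tendsto (fun m : ℕ => ((star (T i)) ^ m) h) Filter.atTop (nhds 0))
    (D : Fin n → (H →L[ℂ] H))
    (hDpos : ∀ i, (D i).IsPositive) (hDsq : ∀ i, (D i) ^ 2 = 1 - T i * star (T i))
    (E : Submodule ℂ H) (hE : E = ((LinearMap.range (((List.ofFn fun i => D i).prod :
      H →L[ℂ] H) : H →ₗ[ℂ] H)).topologicalClosure))
    (L : H →ₗᵢ[ℂ] lp (fun _ : Fin n → ℕ => E) 2)
    (hL : ∀ (h : H) (k : Fin n → ℕ),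
      ((L h) k : H) = (List.ofFn fun i => D i).prod
        (((List.ofFn fun i => (star (T i)) ^ (k i)).prod) h))
    (S : Fin n → (lp (fun _ : Fin n → ℕ => E) 2 →L[ℂ] lp (fun _ : Fin n → ℕ => E) 2))
    (hS : ∀ i (a : lp (fun _ : Fin n → ℕ => E) 2) (k : Fin n → ℕ),
      (S i a) k = if k i = 0 then 0 else a (k - Pi.single i 1)) :
    (Submodule.span ℂ {x : lp (fun _ : Fin n → ℕ => E) 2 |
      ∃ (k : Fin n → ℕ) (h : H),
        x = ((List.ofFn fun i => (S i) ^ (k i)).prod) (L h)}).topologicalClosure = ⊤ :=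
  stmt_14_general n T hcomm D E hE L hL S hS
end

section
/- Let Q be a closed proper subspace of H²(𝔻ⁿ) ≅ ℓ²(ℕⁿ, ℂ) invariant under all Sᵢ*, and set C_i = P_Q Sᵢ|_Q. If the tuple (C₁, …, Cₙ) is doubly commuting (CᵢCⱼ* = Cⱼ*Cᵢ for i ≠ j), then the defect operator D_{C*} = ∏ᵢ(I - CᵢCᵢ*)^{1/2} has rank at most one; indeed D_{C*}² = P_Q P_ℂ|_Q where P_ℂ is the projection onto constants. -/
/-!
The compression `Cᵢ = P_Q Sᵢ|_Q` to an `Sᵢ*`-invariant subspace satisfies `Cᵢ* = Sᵢ*|_Q` and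
`P_Q Sᵢ = Cᵢ P_Q`. Since both tuples are doubly commuting, `Cⱼ*` commutes with `I - CₗCₗ*` and
`Sⱼ*` with `I - SₗSₗ*` for `l ≠ j`, and induction on the number of factors gives
`∏ₗ (I - CₗCₗ*) = P_Q (∏ₗ (I - SₗSₗ*))|_Q`. For the shifts `I - SₗSₗ*` keeps the coefficients
with `kₗ = 0`, so the product on the right is `P_ℂ`. Thus `D² = P_Q P_ℂ|_Q` has range in the line
through `P_Q 1`, and a self-adjoint `D` has `ker D = ker D²`, so its range lies in that line too.
-/

open ContinuousLinearMap
open scoped InnerProductSpace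

def IsDoublyCommuting {ι A : Type*} [Mul A] [Star A] (T : ι → A) : Prop :=
  (∀ i j, Commute (T i) (T j)) ∧ ∀ i j, i ≠ j → Commute (T i) (star (T j))

namespace IsDoublyCommuting

variable {ι A : Type*} {T : ι → A}

theorem star_commute [Monoid A] [StarMul A] (hT : IsDoublyCommuting T) (i j : ι) :
    Commute (star (T i)) (star (T j)) :=
  (hT.1 i j).star_star

theorem star_commute_one_sub_mul_star [Ring A] [StarRing A] (hT : IsDoublyCommuting T) {i j : ι}
    (hij : i ≠ j) :
    Commute (star (T i)) (1 - T j * star (T j)) :=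
  (Commute.one_right _).sub_right (((hT.2 j i hij.symm).symm).mul_right (hT.star_commute i j))

end IsDoublyCommuting

namespace Submodule

variable {𝕜 E ι : Type*} [RCLike 𝕜] [NormedAddCommGroup E] [InnerProductSpace 𝕜 E]
  [CompleteSpace E] {Q : Submodule 𝕜 E}

section Single

theorem apply_mem_orthogonal_of_adjoint_mem {T : E →L[𝕜] E} (hQ : ∀ x ∈ Q, adjoint T x ∈ Q)
    {v : E} (hv : v ∈ Qᗮ) : T v ∈ Qᗮ := by
  intro u hu
  rw [← adjoint_inner_left]
  exact hv _ (hQ u hu)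

variable [CompleteSpace Q] {T : E →L[𝕜] E} {C : Q →L[𝕜] Q}

theorem orthogonalProjectionOnto_comp_of_adjoint_mem (hQ : ∀ x ∈ Q, adjoint T x ∈ Q)
    (hC : C = Q.orthogonalProjectionOnto ∘L T ∘L Q.subtypeL) :
    Q.orthogonalProjectionOnto ∘L T = C ∘L Q.orthogonalProjectionOnto := by
  ext1 x
  have hperp : T (x - Q.orthogonalProjectionOnto x) ∈ Qᗮ :=
    apply_mem_orthogonal_of_adjoint_mem hQ (Q.sub_starProjection_mem_orthogonal x)
  have := orthogonalProjectionOnto_apply_of_mem_orthogonal hperp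
  rw [map_sub, map_sub, sub_eq_zero] at this
  simpa [hC] using this

theorem subtypeL_comp_star_of_adjoint_mem (hQ : ∀ x ∈ Q, adjoint T x ∈ Q)
    (hC : C = Q.orthogonalProjectionOnto ∘L T ∘L Q.subtypeL) :
    Q.subtypeL ∘L star C = adjoint T ∘L Q.subtypeL := by
  ext1 x
  rw [star_eq_adjoint, hC, adjoint_comp, adjoint_comp, adjoint_orthogonalProjectionOnto,
    adjoint_subtypeL]
  exact starProjection_eq_self_iff.2 (hQ x x.2)

end Single

section Tuple

variable [CompleteSpace Q] {T : ι → E →L[𝕜] E} {C : ι → Q →L[𝕜] Q}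

theorem commute_star_compression (hT : IsDoublyCommuting T)
    (hQ : ∀ i, ∀ x ∈ Q, adjoint (T i) x ∈ Q)
    (hC : ∀ i, C i = Q.orthogonalProjectionOnto ∘L T i ∘L Q.subtypeL) (i j : ι) :
    Commute (star (C i)) (star (C j)) := by
  ext1 x
  have h k (y : Q) : (star (C k) y : E) = adjoint (T k) y :=
    DFunLike.congr_fun (subtypeL_comp_star_of_adjoint_mem (hQ k) (hC k)) y
  apply Subtype.ext
  rw [mul_apply_eq_comp, mul_apply_eq_comp, h, h, h, h]
  exact DFunLike.congr_fun (hT.star_commute i j).eq (x : E)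

theorem list_prod_one_sub_mul_star_compression (hT : IsDoublyCommuting T)
    (hQ : ∀ i, ∀ x ∈ Q, adjoint (T i) x ∈ Q)
    (hC : ∀ i, C i = Q.orthogonalProjectionOnto ∘L T i ∘L Q.subtypeL)
    (hdc : ∀ i j, i ≠ j → C i * star (C j) = star (C j) * C i) {L : List ι} (hL : L.Nodup) :
    (L.map fun i => 1 - C i * star (C i)).prod =
      Q.orthogonalProjectionOnto ∘L (L.map fun i => 1 - T i * star (T i)).prod ∘L Q.subtypeL := by
  induction L with
  | nil => ext x; simp
  | cons j L ih =>
    rw [List.nodup_cons] at hL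
    simp only [List.map_cons, List.prod_cons]
    set D := (L.map fun i => 1 - C i * star (C i)).prod
    set F := (L.map fun i => 1 - T i * star (T i)).prod
    have hD : Commute (star (C j)) D := Commute.list_prod_right _ _ fun _ hx => by
      obtain ⟨l, hl, rfl⟩ := List.mem_map.1 hx
      have hjl : j ≠ l := fun h => hL.1 (h ▸ hl)
      exact (Commute.one_right _).sub_right
        (Commute.mul_right (hdc l j hjl.symm).symm (commute_star_compression hT hQ hC j l))
    have hF : Commute (star (T j)) F := Commute.list_prod_right _ _ fun _ hx => by
      obtain ⟨l, hl, rfl⟩ := List.mem_map.1 hx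
      exact hT.star_commute_one_sub_mul_star fun h => hL.1 (h ▸ hl)
    have key : C j * star (C j) * D =
        Q.orthogonalProjectionOnto ∘L (T j * star (T j) * F) ∘L Q.subtypeL := by
      rw [mul_assoc, hD.eq, ih hL.2, mul_assoc, hF.eq]
      simp only [ContinuousLinearMap.mul_def, comp_assoc]
      rw [subtypeL_comp_star_of_adjoint_mem (hQ j) (hC j), ← comp_assoc,
        ← orthogonalProjectionOnto_comp_of_adjoint_mem (hQ j) (hC j), star_eq_adjoint, comp_assoc]
    rw [sub_mul, one_mul, sub_mul, one_mul, key, ih hL.2, sub_comp, comp_sub]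

end Tuple

end Submodule

theorem ContinuousLinearMap.range_le_of_range_sq_le {𝕜 E : Type*} [RCLike 𝕜]
    [NormedAddCommGroup E] [InnerProductSpace 𝕜 E] [CompleteSpace E] {D : E →L[𝕜] E}
    (hD : IsSelfAdjoint D) {V : Submodule 𝕜 E} (hV : IsClosed (V : Set E))
    (h : (D ^ 2).range ≤ V) : D.range ≤ V := by
  have hker : (D ^ 2).ker = D.ker := by
    rw [← ker_adjoint_comp_self D, hD.adjoint_eq, pow_two, ContinuousLinearMap.mul_def]
  calc D.range
      ≤ D.range.topologicalClosure := Submodule.le_topologicalClosure _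
    _ = (D ^ 2).kerᗮ := by rw [hker, orthogonal_ker, hD.adjoint_eq]
    _ = (D ^ 2).range.topologicalClosure := by
      rw [orthogonal_ker, (hD.pow 2).adjoint_eq]
    _ ≤ V := Submodule.topologicalClosure_minimal _ h hV

section Shift

variable {𝕜 ι : Type*} [RCLike 𝕜] [DecidableEq ι]

local notation "ℓ²(" ι ", " 𝕜 ")" => lp (fun _ : ι → ℕ => 𝕜) 2

theorem Pi.single_one_le_iff {k : ι → ℕ} {i : ι} : Pi.single i 1 ≤ k ↔ k i ≠ 0 := by
  refine ⟨fun h => Nat.one_le_iff_ne_zero.1 (by simpa using h i), fun h j => ?_⟩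
  by_cases hj : j = i
  · subst hj; simpa [Nat.one_le_iff_ne_zero] using h
  · simp [hj]

variable {S : ι → ℓ²(ι, 𝕜) →L[𝕜] ℓ²(ι, 𝕜)}
  (hS : ∀ i (a : ℓ²(ι, 𝕜)) (k : ι → ℕ), S i a k = if k i = 0 then 0 else a (k - Pi.single i 1))
include hS

theorem shift_single [DecidableEq (ι → ℕ)] (i : ι) (k : ι → ℕ) :
    S i (lp.single 2 k 1) = lp.single 2 (k + Pi.single i 1) (1 : 𝕜) := by
  ext m
  rw [hS]
  split_ifs with hm
  · have hne : m ≠ k + Pi.single i 1 := by rintro rfl; simp at hm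
    rw [lp.single_apply_ne _ _ _ hne]
  · simp only [lp.single_apply, Pi.single_apply,
      tsub_eq_iff_eq_add_of_le (Pi.single_one_le_iff.2 hm)]

theorem shift_adjoint_apply (i : ι) (a : ℓ²(ι, 𝕜)) (k : ι → ℕ) :
    adjoint (S i) a k = a (k + Pi.single i 1) := by
  classical
  have h (b : ℓ²(ι, 𝕜)) (m : ι → ℕ) : b m = ⟪lp.single 2 m (1 : 𝕜), b⟫_𝕜 := by
    simp [lp.inner_single_left]
  rw [h, adjoint_inner_right, shift_single hS, ← h]

theorem shift_isDoublyCommuting : IsDoublyCommuting S := by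
  have hstar : ∀ i j, Commute (star (S i)) (star (S j)) := fun i j => by
    ext a k
    simp only [mul_apply_eq_comp, star_eq_adjoint, shift_adjoint_apply hS, add_right_comm]
  refine ⟨fun i j => by simpa using (hstar i j).star_star, fun i j hij => ?_⟩
  ext a k
  simp only [mul_apply_eq_comp, star_eq_adjoint, shift_adjoint_apply hS, hS,
    Pi.add_apply, Pi.single_eq_of_ne hij, add_zero]
  split_ifs with hk
  · rfl
  · rw [tsub_add_eq_add_tsub (Pi.single_one_le_iff.2 hk)]

theorem one_sub_shift_mul_star_apply (i : ι) (a : ℓ²(ι, 𝕜)) (k : ι → ℕ) :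
    ((1 - S i * star (S i)) a) k = if k i = 0 then a k else 0 := by
  rw [sub_apply, one_apply_eq_self, mul_apply_eq_comp, lp.coeFn_sub, Pi.sub_apply, hS,
    star_eq_adjoint, shift_adjoint_apply hS]
  split_ifs with hk
  · simp
  · rw [tsub_add_cancel_of_le (Pi.single_one_le_iff.2 hk), sub_self]

theorem list_prod_one_sub_shift_mul_star_apply (L : List ι) (a : ℓ²(ι, 𝕜)) (k : ι → ℕ) :
    ((L.map fun i => 1 - S i * star (S i)).prod a) k = if ∀ i ∈ L, k i = 0 then a k else 0 := by
  induction L with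
  | nil => simp
  | cons j L ih =>
    rw [List.map_cons, List.prod_cons, mul_apply_eq_comp, one_sub_shift_mul_star_apply hS, ih]
    by_cases hj : k j = 0 <;> simp [hj]

theorem list_prod_one_sub_shift_mul_star [DecidableEq (ι → ℕ)] {L : List ι} (hL : ∀ i, i ∈ L)
    {Pc : ℓ²(ι, 𝕜) →L[𝕜] ℓ²(ι, 𝕜)}
    (hPc : ∀ (a : ℓ²(ι, 𝕜)) (k : ι → ℕ), (Pc a) k = if k = 0 then a 0 else 0) :
    (L.map fun i => 1 - S i * star (S i)).prod = Pc := by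
  ext a k
  rw [list_prod_one_sub_shift_mul_star_apply hS, hPc]
  have hk0 : (∀ i ∈ L, k i = 0) ↔ k = 0 :=
    ⟨fun h => funext fun i => h i (hL i), fun h i _ => by simp [h]⟩
  simp only [hk0]
  split_ifs with hk <;> simp [hk]

end Shift

theorem stmt_17_general (n : ℕ)
    (S : Fin n → (lp (fun _ : Fin n → ℕ => ℂ) 2 →L[ℂ] lp (fun _ : Fin n → ℕ => ℂ) 2))
    (hS : ∀ i (a : lp (fun _ : Fin n → ℕ => ℂ) 2) (k : Fin n → ℕ),
      (S i a) k = if k i = 0 then 0 else a (k - Pi.single i 1))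
    (Pc : lp (fun _ : Fin n → ℕ => ℂ) 2 →L[ℂ] lp (fun _ : Fin n → ℕ => ℂ) 2)
    (hPc : ∀ (a : lp (fun _ : Fin n → ℕ => ℂ) 2) (k : Fin n → ℕ),
      (Pc a) k = if k = 0 then a 0 else 0)
    (Q : Submodule ℂ (lp (fun _ : Fin n → ℕ => ℂ) 2)) [CompleteSpace Q]
    (hQinv : ∀ i, ∀ x ∈ Q, ContinuousLinearMap.adjoint (S i) x ∈ Q)
    (C : Fin n → (Q →L[ℂ] Q))
    (hC : ∀ i, C i = (Q.orthogonalProjectionOnto).comp ((S i).comp (Q.subtypeL)))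
    (hdc : ∀ i j, i ≠ j → C i * star (C j) = star (C j) * C i)
    (Dc : Q →L[ℂ] Q) (hDcpos : Dc.IsPositive)
    (hDcsq : Dc ^ 2 = (List.ofFn fun i => 1 - C i * star (C i)).prod) :
    Dc ^ 2 = (Q.orthogonalProjectionOnto).comp (Pc.comp (Q.subtypeL)) ∧
    Module.rank ℂ (LinearMap.range ((Dc : Q →L[ℂ] Q) : Q →ₗ[ℂ] Q)) ≤ 1 := by
  have hsq : Dc ^ 2 = Q.orthogonalProjectionOnto ∘L Pc ∘L Q.subtypeL := by
    rw [hDcsq, List.ofFn_eq_map, Submodule.list_prod_one_sub_mul_star_compression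
      (shift_isDoublyCommuting hS) hQinv hC hdc (List.nodup_finRange n),
      list_prod_one_sub_shift_mul_star hS List.mem_finRange hPc]
  refine ⟨hsq, ?_⟩
  set v : Q := Q.orthogonalProjectionOnto (lp.single 2 0 1)
  have hsq_range : (Dc ^ 2).range ≤ Submodule.span ℂ {v} := by
    rintro _ ⟨x, rfl⟩
    refine Submodule.mem_span_singleton.2 ⟨(x : lp (fun _ : Fin n → ℕ => ℂ) 2) 0, ?_⟩
    have hPcx : Pc x = (x : lp (fun _ : Fin n → ℕ => ℂ) 2) 0 • lp.single 2 0 1 := by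
      ext k
      by_cases hk : k = 0 <;> simp [hPc, hk]
    simp [hsq, hPcx, v]
  have hrange := range_le_of_range_sq_le hDcpos.isSelfAdjoint
    (Submodule.closed_of_finiteDimensional _) hsq_range
  calc Module.rank ℂ Dc.range
      ≤ Module.rank ℂ (Submodule.span ℂ {v}) := Submodule.rank_mono hrange
    _ ≤ 1 := (rank_span_le _).trans (by simp)

/-- Let `Q` be a proper closed `(S₁*, …, Sₙ*)`-invariant subspace of `H²(𝔻ⁿ) ≅ ℓ²(ℕⁿ, ℂ)`
and `Cᵢ = P_Q Sᵢ|_Q`.  If `(C₁, …, Cₙ)` is doubly commuting, then the defect operator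
`D_{C*} = ∏ᵢ (I - CᵢCᵢ*)^{1/2}` has rank at most one; indeed
`D_{C*}² = P_Q P_ℂ|_Q`, where `P_ℂ` is the projection onto the constants. -/
theorem stmt_17 (n : ℕ)
    (S : Fin n → (lp (fun _ : Fin n → ℕ => ℂ) 2 →L[ℂ] lp (fun _ : Fin n → ℕ => ℂ) 2))
    (hS : ∀ i (a : lp (fun _ : Fin n → ℕ => ℂ) 2) (k : Fin n → ℕ),
      (S i a) k = if k i = 0 then 0 else a (k - Pi.single i 1))
    (Pc : lp (fun _ : Fin n → ℕ => ℂ) 2 →L[ℂ] lp (fun _ : Fin n → ℕ => ℂ) 2)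
    (hPc : ∀ (a : lp (fun _ : Fin n → ℕ => ℂ) 2) (k : Fin n → ℕ),
      (Pc a) k = if k = 0 then a 0 else 0)
    (Q : Submodule ℂ (lp (fun _ : Fin n → ℕ => ℂ) 2)) [CompleteSpace Q]
    (hQproper : Q ≠ ⊤)
    (hQinv : ∀ i, ∀ x ∈ Q, ContinuousLinearMap.adjoint (S i) x ∈ Q)
    (C : Fin n → (Q →L[ℂ] Q))
    (hC : ∀ i, C i = (Q.orthogonalProjectionOnto).comp ((S i).comp (Q.subtypeL)))
    (hdc : ∀ i j, i ≠ j → C i * star (C j) = star (C j) * C i)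
    (Dc : Q →L[ℂ] Q) (hDcpos : Dc.IsPositive)
    (hDcsq : Dc ^ 2 = (List.ofFn fun i => 1 - C i * star (C i)).prod) :
    Dc ^ 2 = (Q.orthogonalProjectionOnto).comp (Pc.comp (Q.subtypeL)) ∧
    Module.rank ℂ (LinearMap.range ((Dc : Q →L[ℂ] Q) : Q →ₗ[ℂ] Q)) ≤ 1 :=
  stmt_17_general n S hS Pc hPc Q hQinv C hC hdc Dc hDcpos hDcsq
end
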